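/- Let $N_p, N_q, N_r$ be subspaces of $\mathbb{C}^{d_p}, \mathbb{C}^{d_q}, \mathbb{C}^{d_r}$ with Plücker coordinates, and let $A_1: \mathbb{C}^{d_p} \to \mathbb{C}^{d_q}$, $A_2: \mathbb{C}^{d_q} \to \mathbb{C}^{d_r}$ be linear maps with $A_1(N_p) \subseteq N_q$ and $A_2(N_q) \subseteq N_r$. Then the Plücker coordinates of $N_p$ and $N_r$ satisfy the second-order quiver Plücker relations for the composite matrix $A_2 A_1 = (m_{j,i})$: for all $I \subseteq \{1,\dots,d_p\}$ with $|I| = \dim N_p - 1$ and $J \subseteq \{1,\dots,d_r\}$ with $|J| = \dim N_r + 1$, $\sum_{i \notin I, j \in J} (-1)^{\epsilon(i,I)+\epsilon(j,J)} m_{j,i} \Delta_{I\cup\{i\}}(N_p) \Delta_{J\setminus\{j\}}(N_r) = 0$. -/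

import Mathlib

open Matrix Finset

def eps {d : ℕ} (i : Fin d) (I : Finset (Fin d)) : ℕ := (I.filter fun i' => i' ≤ i).card

noncomputable def plucker {d e : ℕ} (B : Matrix (Fin d) (Fin e) ℂ) (I : Finset (Fin d)) : ℂ :=
  if h : I.card = e then (B.submatrix (fun k => (I.orderIsoOfFin h k : Fin d)) id).det else 0

/-- The columns of `B` form a basis of the subspace `N` of `ℂ^d`. -/
def IsColBasis {d e : ℕ} (B : Matrix (Fin d) (Fin e) ℂ) (N : Submodule ℂ (Fin d → ℂ)) : Prop :=
  LinearIndependent ℂ (fun l => fun i => B i l) ∧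
    Submodule.span ℂ (Set.range fun l => fun i => B i l) = N

noncomputable def qpr {dp dq ep eq : ℕ} (A : Matrix (Fin dq) (Fin dp) ℂ)
    (Bp : Matrix (Fin dp) (Fin ep) ℂ) (Bq : Matrix (Fin dq) (Fin eq) ℂ)
    (I : Finset (Fin dp)) (J : Finset (Fin dq)) : ℂ :=
  ∑ i ∈ Iᶜ, ∑ j ∈ J,
    (-1 : ℂ) ^ (eps i I + eps j J) * A j i * plucker Bp (insert i I) * plucker Bq (J.erase j)

/-!
Laplace expansion of `Δ_{I ∪ {i}}` along the row `i` shows that the vector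
`i ↦ (-1)^ε(i,I) Δ_{I ∪ {i}}(N_p)` is `B_p c` for the vector `c` of cofactors, so it lies in `N_p`
and its image under `A₂ A₁` lies in `N_r`. Dually, `y ↦ ∑_{j ∈ J} (-1)^ε(j,J) y_j Δ_{J \ {j}}(N_r)`
is, up to sign, the determinant of `[y | B_r]` on the rows `J`, so it vanishes on `N_r`.
The quiver Plücker relation is this functional evaluated at that image.
-/

section Plucker

variable {d e : ℕ}

theorem plucker_of_card_eq (B : Matrix (Fin d) (Fin e) ℂ) {s : Finset (Fin d)} (h : s.card = e) :
    plucker B s = (B.submatrix (s.orderEmbOfFin h) id).det := by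
  simp only [plucker, dif_pos h, coe_orderIsoOfFin_apply]

theorem plucker_of_card_ne (B : Matrix (Fin d) (Fin e) ℂ) {s : Finset (Fin d)} (h : s.card ≠ e) :
    plucker B s = 0 :=
  dif_neg h

theorem eps_orderEmbOfFin {n : ℕ} (s : Finset (Fin d)) (h : s.card = n) (k : Fin n) :
    eps (s.orderEmbOfFin h k) s = k + 1 := by
  set g := s.orderEmbOfFin h
  have : s.filter (· ≤ g k) = (Iic k).map g.toEmbedding := by
    ext a
    simp only [mem_filter, mem_map, mem_Iic, RelEmbedding.coe_toEmbedding]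
    constructor
    · rintro ⟨ha, hle⟩
      obtain ⟨m, rfl⟩ : a ∈ Set.range g := by simpa [g] using ha
      exact ⟨m, g.le_iff_le.mp hle, rfl⟩
    · rintro ⟨m, hm, rfl⟩
      exact ⟨orderEmbOfFin_mem s h m, g.monotone hm⟩
  rw [eps, this, card_map, Fin.card_Iic]

theorem eps_erase_orderEmbOfFin {n : ℕ} (s : Finset (Fin d)) (h : s.card = n) (k : Fin n) :
    eps (s.orderEmbOfFin h k) (s.erase (s.orderEmbOfFin h k)) = k := by
  have h' := eps_orderEmbOfFin s h k
  rw [eps, filter_erase, card_erase_of_mem (by simp)] at *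
  omega

theorem orderEmbOfFin_eq_comp_succAbove {n : ℕ} {s t : Finset (Fin d)} (hs : s.card = n + 1)
    (ht : t.card = n) (k : Fin (n + 1)) (hst : t = s.erase (s.orderEmbOfFin hs k)) :
    ⇑(t.orderEmbOfFin ht) = s.orderEmbOfFin hs ∘ k.succAbove := by
  subst hst
  exact (orderEmbOfFin_unique ht
    (fun m => mem_erase.mpr
      ⟨(s.orderEmbOfFin hs).injective.ne (Fin.succAbove_ne k m), orderEmbOfFin_mem s hs _⟩)
    ((s.orderEmbOfFin hs).strictMono.comp (Fin.strictMono_succAbove k))).symm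

theorem plucker_erase_orderEmbOfFin {n : ℕ} (B : Matrix (Fin d) (Fin n) ℂ) (s : Finset (Fin d))
    (h : s.card = n + 1) (k : Fin (n + 1)) :
    plucker B (s.erase (s.orderEmbOfFin h k)) =
      (B.submatrix (s.orderEmbOfFin h ∘ k.succAbove) id).det := by
  have h' : (s.erase (s.orderEmbOfFin h k)).card = n := by simp [card_erase_of_mem, h]
  rw [plucker_of_card_eq B h', orderEmbOfFin_eq_comp_succAbove h h' k rfl]

theorem signed_plucker_insert_eq_mulVec {n : ℕ} (B : Matrix (Fin d) (Fin (n + 1)) ℂ)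
    (I : Finset (Fin d)) (hI : I.card = n) :
    (fun i => (-1 : ℂ) ^ eps i I * plucker B (insert i I)) =
      B *ᵥ fun l => (-1) ^ (l : ℕ) * (B.submatrix (I.orderEmbOfFin hI) l.succAbove).det := by
  ext i
  simp only [mulVec, dotProduct]
  by_cases hi : i ∈ I
  · have hrow : (B.submatrix (Fin.cons i (I.orderEmbOfFin hI)) id).det =
        ∑ l, B i l * ((-1) ^ (l : ℕ) * (B.submatrix (I.orderEmbOfFin hI) l.succAbove).det) := by
      rw [det_succ_row_zero]
      refine sum_congr rfl fun l _ => ?_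
      simp only [submatrix_apply, Fin.cons_zero, submatrix_submatrix, id_eq]
      rw [show Fin.cons i (I.orderEmbOfFin hI) ∘ Fin.succ = ⇑(I.orderEmbOfFin hI) from
        funext fun m => Fin.cons_succ _ _ _, Function.id_comp]
      ring
    rw [insert_eq_of_mem hi, plucker_of_card_ne B (by omega), mul_zero, ← hrow]
    obtain ⟨m, rfl⟩ : i ∈ Set.range (I.orderEmbOfFin hI) := by simpa using hi
    exact (det_zero_of_row_eq (Fin.succ_ne_zero m).symm (by ext; simp)).symm
  · have hs : (insert i I).card = n + 1 := by rw [card_insert_of_notMem hi, hI]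
    set g := (insert i I).orderEmbOfFin hs
    obtain ⟨k, hk⟩ : i ∈ Set.range g := by simp [g]
    have hI' : I = (insert i I).erase (g k) := by rw [hk, erase_insert hi]
    have heps : eps i I = k := by
      rw [hI', ← eps_erase_orderEmbOfFin _ hs k, hk]
    rw [heps, plucker_of_card_eq B hs, det_succ_row _ k, mul_sum,
      orderEmbOfFin_eq_comp_succAbove hs hI k hI']
    refine sum_congr rfl fun l _ => ?_
    have hsign : (-1 : ℂ) ^ (k : ℕ) * (-1) ^ ((k : ℕ) + l) = (-1) ^ (l : ℕ) := by
      rw [← pow_add, ← add_assoc, ← two_mul, pow_add, pow_mul]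
      norm_num
    simp only [submatrix_apply, submatrix_submatrix, id_eq, Function.id_comp]
    rw [show g k = i from hk]
    linear_combination (B i l * (B.submatrix (g ∘ k.succAbove) l.succAbove).det) * hsign

theorem sum_signed_mulVec_mul_plucker_erase_eq_zero {n : ℕ} (B : Matrix (Fin d) (Fin n) ℂ)
    (J : Finset (Fin d)) (hJ : J.card = n + 1) (c : Fin n → ℂ) :
    ∑ j ∈ J, (-1 : ℂ) ^ eps j J * (B *ᵥ c) j * plucker B (J.erase j) = 0 := by
  -- The sum is minus the Laplace expansion, along the first column, of the matrix `[B *ᵥ c | B]`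
  -- restricted to the rows in `J`; its first column is a combination of the others.
  let M : Matrix (Fin (n + 1)) (Fin (n + 1)) ℂ :=
    of fun k => Fin.cons ((B *ᵥ c) (J.orderEmbOfFin hJ k)) (B (J.orderEmbOfFin hJ k))
  have hM : M.det = 0 := exists_mulVec_eq_zero_iff.mp
    ⟨Fin.cons (-1) c, fun h => by simpa using congrFun h 0,
      by ext k; simp [M, mulVec, dotProduct, Fin.sum_univ_succ]⟩
  have hreindex := sum_map univ (J.orderEmbOfFin hJ).toEmbedding
    fun j => (-1 : ℂ) ^ eps j J * (B *ᵥ c) j * plucker B (J.erase j)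
  rw [map_orderEmbOfFin_univ] at hreindex
  rw [hreindex, ← neg_eq_zero, ← hM, det_succ_column_zero, ← sum_neg_distrib]
  refine sum_congr rfl fun k _ => ?_
  have hminor : M.submatrix k.succAbove Fin.succ =
      B.submatrix (J.orderEmbOfFin hJ ∘ k.succAbove) id := by
    ext; simp [M]
  simp only [RelEmbedding.coe_toEmbedding, eps_orderEmbOfFin, plucker_erase_orderEmbOfFin,
    hminor, pow_succ]
  simp only [M, of_apply, Fin.cons_zero]
  ring

end Plucker

theorem IsColBasis.mem_iff {d e : ℕ} {B : Matrix (Fin d) (Fin e) ℂ}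
    {N : Submodule ℂ (Fin d → ℂ)} (h : IsColBasis B N) (x : Fin d → ℂ) :
    x ∈ N ↔ ∃ c, B *ᵥ c = x := by
  rw [← h.2]
  change x ∈ Submodule.span ℂ (Set.range B.col) ↔ _
  rw [← range_mulVecLin]
  rfl

theorem qpr_eq_sum_signed_mulVec {dp dq ep eq : ℕ} (A : Matrix (Fin dq) (Fin dp) ℂ)
    (Bp : Matrix (Fin dp) (Fin ep) ℂ) (Bq : Matrix (Fin dq) (Fin eq) ℂ)
    (I : Finset (Fin dp)) (J : Finset (Fin dq)) (hI : I.card ≠ ep) :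
    qpr A Bp Bq I J = ∑ j ∈ J, (-1 : ℂ) ^ eps j J *
      (A *ᵥ fun i => (-1 : ℂ) ^ eps i I * plucker Bp (insert i I)) j * plucker Bq (J.erase j) := by
  rw [qpr, sum_subset (subset_univ Iᶜ) fun i _ hi => by
    rw [insert_eq_of_mem (by simpa using hi), plucker_of_card_ne Bp hI]; simp, sum_comm]
  simp only [mulVec, dotProduct, mul_sum, sum_mul]
  refine sum_congr rfl fun j _ => sum_congr rfl fun i _ => ?_
  ring

theorem stmt5_general {dp dq dr ep er : ℕ}
    (Np : Submodule ℂ (Fin dp → ℂ)) (Nq : Submodule ℂ (Fin dq → ℂ))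
    (Nr : Submodule ℂ (Fin dr → ℂ))
    (Bp : Matrix (Fin dp) (Fin ep) ℂ)
    (Br : Matrix (Fin dr) (Fin er) ℂ)
    (hBp : IsColBasis Bp Np) (hBr : IsColBasis Br Nr)
    (A₁ : Matrix (Fin dq) (Fin dp) ℂ) (A₂ : Matrix (Fin dr) (Fin dq) ℂ)
    (hA₁ : ∀ x ∈ Np, A₁.mulVec x ∈ Nq) (hA₂ : ∀ x ∈ Nq, A₂.mulVec x ∈ Nr)
    (I : Finset (Fin dp)) (hI : I.card + 1 = ep)
    (J : Finset (Fin dr)) (hJ : J.card = er + 1) :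
    qpr (A₂ * A₁) Bp Br I J = 0 := by
  subst hI
  rw [qpr_eq_sum_signed_mulVec _ _ _ _ _ (by omega), signed_plucker_insert_eq_mulVec Bp I rfl,
    ← mulVec_mulVec]
  obtain ⟨c, hc⟩ := (hBr.mem_iff _).1 (hA₂ _ (hA₁ _ ((hBp.mem_iff _).2 ⟨_, rfl⟩)))
  rw [← hc]
  exact sum_signed_mulVec_mul_plucker_erase_eq_zero Br J hJ c

theorem stmt5 {dp dq dr ep eq er : ℕ}
    (Np : Submodule ℂ (Fin dp → ℂ)) (Nq : Submodule ℂ (Fin dq → ℂ))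
    (Nr : Submodule ℂ (Fin dr → ℂ))
    (Bp : Matrix (Fin dp) (Fin ep) ℂ) (Bq : Matrix (Fin dq) (Fin eq) ℂ)
    (Br : Matrix (Fin dr) (Fin er) ℂ)
    (hBp : IsColBasis Bp Np) (hBq : IsColBasis Bq Nq) (hBr : IsColBasis Br Nr)
    (A₁ : Matrix (Fin dq) (Fin dp) ℂ) (A₂ : Matrix (Fin dr) (Fin dq) ℂ)
    (hA₁ : ∀ x ∈ Np, A₁.mulVec x ∈ Nq) (hA₂ : ∀ x ∈ Nq, A₂.mulVec x ∈ Nr)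
    (I : Finset (Fin dp)) (hI : I.card + 1 = ep)
    (J : Finset (Fin dr)) (hJ : J.card = er + 1) :
    qpr (A₂ * A₁) Bp Br I J = 0 :=
  stmt5_general Np Nq Nr Bp Br hBp hBr A₁ A₂ hA₁ hA₂ I hI J hJ
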